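/- Let X ∈ ℝ^{d1×d2} have singular value decomposition X = U Σ Vᵀ with Σ = diag(σ_1, …, σ_r) the diagonal matrix of positive singular values, and for τ ≥ 0 define the singular value thresholding operator D_τ(X) = U · diag((σ_1 − τ)_+, …, (σ_r − τ)_+) · Vᵀ, where (x)_+ = max{x, 0}. Then for every τ ≥ 0 and every X ∈ ℝ^{d1×d2}, D_τ(X) is a minimizer over Y ∈ ℝ^{d1×d2} of (1/2)‖Y − X‖_F² + τ‖Y‖_*. -/

import Mathlib

/-!
With `p i = max (σ i - τ) 0` and `D = U diag(p) Vᵀ`, the residual `G = X - D = U diag(min (σ i) τ) Vᵀ`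
has spectral norm at most `τ` and satisfies `⟨G, D⟩ = τ ∑ p i = τ ‖D‖_*`; that is, `G / τ` is a
subgradient of the nuclear norm at `D`. Expanding `‖Y - X‖_F² = ‖Y - D‖_F² - 2⟨G, Y - D⟩ + ‖G‖_F²`,
optimality of `D` reduces to the trace duality `⟨G, Y⟩ ≤ ‖G‖ ‖Y‖_*`, which is Cauchy–Schwarz in an
orthonormal eigenbasis of `Yᵀ Y`. The value `‖U diag(p) Vᵀ‖_* = ∑ p i` is read off the characteristic
polynomial, since `(U diag(p) Vᵀ)ᵀ (U diag(p) Vᵀ) = V (diag(p²) Vᵀ)` and `diag(p²) Vᵀ V = diag(p²)`.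
-/

open Real Matrix

/-- The nuclear norm of a real matrix: the sum of its singular values, i.e. the sum of the
square roots of the eigenvalues of `Mᵀ M`. -/
noncomputable def nuclearNorm {d1 d2 : ℕ} (M : Matrix (Fin d1) (Fin d2) ℝ) : ℝ :=
  ∑ i, Real.sqrt ((show (Mᵀ * M).IsHermitian by
    simpa using Matrix.isHermitian_conjTranspose_mul_self M).eigenvalues i)

def frobSq {d1 d2 : ℕ} (M : Matrix (Fin d1) (Fin d2) ℝ) : ℝ := ∑ i, ∑ j, (M i j) ^ 2

open scoped Matrix.Norms.L2Operator InnerProductSpace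

theorem frobSq_sub {d1 d2 : ℕ} (A B : Matrix (Fin d1) (Fin d2) ℝ) :
    frobSq (A - B) = frobSq A - 2 * trace (Bᵀ * A) + frobSq B := by
  simp only [frobSq, trace, diag, mul_apply, transpose_apply, Matrix.sub_apply, sub_sq,
    Finset.sum_add_distrib, Finset.sum_sub_distrib, Finset.mul_sum]
  rw [Finset.sum_comm (f := fun j i => 2 * (B i j * A i j))]
  simp only [mul_assoc, mul_comm (B _ _)]

theorem frobSq_neg {d1 d2 : ℕ} (A : Matrix (Fin d1) (Fin d2) ℝ) : frobSq (-A) = frobSq A := by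
  simp [frobSq]

theorem frobSq_nonneg {d1 d2 : ℕ} (A : Matrix (Fin d1) (Fin d2) ℝ) : 0 ≤ frobSq A := by
  unfold frobSq; positivity

section SVDForm

variable {m n r : Type*} [Fintype m] [Fintype n] [Fintype r] [DecidableEq r]

theorem l2_opNorm_le_one_of_transpose_mul_self_eq_one {U : Matrix m r ℝ} (hU : Uᵀ * U = 1) :
    ‖U‖ ≤ 1 := by
  have h : ‖U‖ * ‖U‖ ≤ 1 := by
    rw [← l2_opNorm_conjTranspose_mul_self, conjTranspose_eq_transpose_of_trivial, hU,
      ← diagonal_one, l2_opNorm_diagonal]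
    exact pi_norm_le_iff_of_nonneg zero_le_one |>.2 fun _ => by simp
  nlinarith [norm_nonneg U]

theorem l2_opNorm_svd_le [DecidableEq n] {U : Matrix m r ℝ} {V : Matrix n r ℝ}
    (hU : Uᵀ * U = 1) (hV : Vᵀ * V = 1) (a : r → ℝ) : ‖U * diagonal a * Vᵀ‖ ≤ ‖a‖ := by
  have hVt : ‖Vᵀ‖ ≤ 1 := by
    rw [← conjTranspose_eq_transpose_of_trivial, l2_opNorm_conjTranspose]
    exact l2_opNorm_le_one_of_transpose_mul_self_eq_one hV
  calc ‖U * diagonal a * Vᵀ‖ ≤ ‖U‖ * ‖diagonal a‖ * ‖Vᵀ‖ :=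
        (l2_opNorm_mul _ _).trans (by gcongr; exact l2_opNorm_mul _ _)
    _ ≤ 1 * ‖a‖ * 1 := by
        rw [l2_opNorm_diagonal]
        gcongr
        exact l2_opNorm_le_one_of_transpose_mul_self_eq_one hU
    _ = ‖a‖ := by ring

theorem trace_svd_transpose_mul_svd {U : Matrix m r ℝ} {V : Matrix n r ℝ} (hU : Uᵀ * U = 1)
    (hV : Vᵀ * V = 1) (a b : r → ℝ) :
    trace ((U * diagonal a * Vᵀ)ᵀ * (U * diagonal b * Vᵀ)) = ∑ i, a i * b i := by
  simp only [transpose_mul, transpose_transpose, diagonal_transpose, Matrix.mul_assoc]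
  rw [← Matrix.mul_assoc Uᵀ, hU, Matrix.one_mul, trace_mul_comm, Matrix.mul_assoc,
    Matrix.mul_assoc, hV, Matrix.mul_one, diagonal_mul_diagonal, trace_diagonal]

end SVDForm

theorem isHermitian_transpose_mul_self {m n : Type*} [Fintype m] (M : Matrix m n ℝ) :
    (Mᵀ * M).IsHermitian := by
  simpa using isHermitian_conjTranspose_mul_self M

section Eigenbasis

variable {m n : Type*} [Fintype m] [Fintype n] [DecidableEq m] [DecidableEq n]

theorem inner_toEuclideanLin_transpose_mul (A B : Matrix m n ℝ) (x : EuclideanSpace ℝ n) :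
    ⟪x, toEuclideanLin (Aᵀ * B) x⟫_ℝ = ⟪toEuclideanLin A x, toEuclideanLin B x⟫_ℝ := by
  have hmul : toEuclideanLin (Aᵀ * B) x = toEuclideanLin Aᴴ (toEuclideanLin B x) := by
    simp [toLpLin_apply, mulVec_mulVec]
  rw [hmul, toEuclideanLin_conjTranspose_eq_adjoint, LinearMap.adjoint_inner_right]

theorem trace_transpose_mul_eq_sum_inner (A B : Matrix m n ℝ)
    (b : OrthonormalBasis n ℝ (EuclideanSpace ℝ n)) :
    trace (Aᵀ * B) = ∑ k, ⟪toEuclideanLin A (b k), toEuclideanLin B (b k)⟫_ℝ := by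
  rw [← trace_toLin_eq (Aᵀ * B) (EuclideanSpace.basisFun n ℝ).toBasis,
    LinearMap.trace_eq_sum_inner _ b, ← toEuclideanLin_eq_toLin_orthonormal]
  exact Finset.sum_congr rfl fun k _ => inner_toEuclideanLin_transpose_mul A B (b k)

theorem eigenvalues_transpose_mul_self_eq_norm_sq (M : Matrix m n ℝ)
    (hM : (Mᵀ * M).IsHermitian) (k : n) :
    hM.eigenvalues k = ‖toEuclideanLin M (hM.eigenvectorBasis k)‖ ^ 2 := by
  rw [← real_inner_self_eq_norm_sq, ← inner_toEuclideanLin_transpose_mul, toLpLin_apply,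
    hM.mulVec_eigenvectorBasis k, WithLp.toLp_smul, WithLp.toLp_ofLp, inner_smul_right,
    real_inner_self_eq_norm_sq, hM.eigenvectorBasis.orthonormal.1 k, one_pow, mul_one]

end Eigenbasis

theorem nuclearNorm_nonneg {d1 d2 : ℕ} (A : Matrix (Fin d1) (Fin d2) ℝ) : 0 ≤ nuclearNorm A := by
  unfold nuclearNorm; positivity

theorem nuclearNorm_eq_sum_norm {d1 d2 : ℕ} (M : Matrix (Fin d1) (Fin d2) ℝ)
    (hM : (Mᵀ * M).IsHermitian) :
    nuclearNorm M = ∑ k, ‖toEuclideanLin M (hM.eigenvectorBasis k)‖ := by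
  refine Finset.sum_congr rfl fun k _ => ?_
  rw [eigenvalues_transpose_mul_self_eq_norm_sq M hM, Real.sqrt_sq (norm_nonneg _)]

theorem trace_transpose_mul_le_opNorm_mul_nuclearNorm {d1 d2 : ℕ}
    (G Y : Matrix (Fin d1) (Fin d2) ℝ) : trace (Gᵀ * Y) ≤ ‖G‖ * nuclearNorm Y := by
  set b := (isHermitian_transpose_mul_self Y).eigenvectorBasis
  rw [trace_transpose_mul_eq_sum_inner G Y b,
    nuclearNorm_eq_sum_norm Y (isHermitian_transpose_mul_self Y), Finset.mul_sum]
  gcongr with k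
  calc ⟪toEuclideanLin G (b k), toEuclideanLin Y (b k)⟫_ℝ
      ≤ ‖toEuclideanLin G (b k)‖ * ‖toEuclideanLin Y (b k)‖ := real_inner_le_norm _ _
    _ ≤ ‖G‖ * ‖toEuclideanLin Y (b k)‖ := by
      gcongr
      exact (G.l2_opNorm_mulVec (b k)).trans_eq (by rw [b.orthonormal.1 k, mul_one])

open Polynomial in
theorem sum_sqrt_roots_X_pow_mul_prod {ι : Type*} [Fintype ι] (k : ℕ) (f : ι → ℝ) :
    ((X ^ k * ∏ i, (X - C (f i))).roots.map Real.sqrt).sum = ∑ i, √(f i) := by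
  rw [roots_mul ((monic_X_pow k).mul (monic_prod_X_sub_C f _)).ne_zero, roots_X_pow,
    roots_prod _ _ (monic_prod_X_sub_C f _).ne_zero]
  simp [Multiset.map_nsmul, Multiset.sum_nsmul, roots_X_sub_C]

/- The factor `X ^ k` only adds zero roots, which contribute `√0 = 0`; it lets the nuclear norm
be compared with the characteristic polynomial of a matrix of another size. -/
open Polynomial in
theorem nuclearNorm_eq_sum_sqrt_roots {d1 d2 : ℕ} (M : Matrix (Fin d1) (Fin d2) ℝ) (k : ℕ) :
    nuclearNorm M = ((X ^ k * (Mᵀ * M).charpoly).roots.map Real.sqrt).sum := by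
  rw [(isHermitian_transpose_mul_self M).charpoly_eq]
  simp only [RCLike.ofReal_real_eq_id, id, sum_sqrt_roots_X_pow_mul_prod]
  rfl

open Polynomial in
theorem nuclearNorm_svd {d1 d2 r : ℕ} {U : Matrix (Fin d1) (Fin r) ℝ}
    {V : Matrix (Fin d2) (Fin r) ℝ} (hU : Uᵀ * U = 1) (hV : Vᵀ * V = 1) {p : Fin r → ℝ}
    (hp : ∀ i, 0 ≤ p i) : nuclearNorm (U * diagonal p * Vᵀ) = ∑ i, p i := by
  have hgram : (U * diagonal p * Vᵀ)ᵀ * (U * diagonal p * Vᵀ) = V * (diagonal (p * p) * Vᵀ) := by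
    simp only [transpose_mul, transpose_transpose, diagonal_transpose, Matrix.mul_assoc]
    rw [← Matrix.mul_assoc Uᵀ, hU, Matrix.one_mul, ← Matrix.mul_assoc (diagonal p),
      diagonal_mul_diagonal]
    rfl
  have hcharpoly := charpoly_mul_comm' V (diagonal (p * p) * Vᵀ)
  rw [Matrix.mul_assoc, hV, Matrix.mul_one, charpoly_diagonal, ← hgram, Fintype.card_fin,
    Fintype.card_fin] at hcharpoly
  rw [nuclearNorm_eq_sum_sqrt_roots _ r, hcharpoly, sum_sqrt_roots_X_pow_mul_prod]
  simp [Real.sqrt_mul_self (hp _)]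

theorem objective_le_of_dual_certificate {d1 d2 : ℕ} {X D : Matrix (Fin d1) (Fin d2) ℝ} {τ : ℝ}
    (hnorm : ‖X - D‖ ≤ τ) (htrace : trace ((X - D)ᵀ * D) = τ * nuclearNorm D)
    (Y : Matrix (Fin d1) (Fin d2) ℝ) :
    1 / 2 * frobSq (D - X) + τ * nuclearNorm D ≤ 1 / 2 * frobSq (Y - X) + τ * nuclearNorm Y := by
  have hexpand :
      frobSq (Y - X) = frobSq (Y - D) - 2 * trace ((X - D)ᵀ * (Y - D)) + frobSq (D - X) := by
    rw [← frobSq_neg (D - X), neg_sub, ← frobSq_sub, sub_sub_sub_cancel_right]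
  have hdual : trace ((X - D)ᵀ * Y) ≤ τ * nuclearNorm Y :=
    (trace_transpose_mul_le_opNorm_mul_nuclearNorm _ _).trans
      (mul_le_mul_of_nonneg_right hnorm (nuclearNorm_nonneg Y))
  rw [hexpand, Matrix.mul_sub, trace_sub, htrace]
  linarith [frobSq_nonneg (Y - D)]

/-- Singular value thresholding solves the nuclear-norm-regularized least-squares problem
(Theorem 2.1 of Cai–Candès–Shen): if `X = U Σ Vᵀ` is an SVD of `X` with positive singular
values `σ`, then for every `τ ≥ 0`, `D_τ(X) = U diag((σ_i − τ)_+) Vᵀ` minimizes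
`Y ↦ (1/2)‖Y − X‖_F² + τ‖Y‖_*`. -/
theorem singular_value_thresholding (d1 d2 r : ℕ) (X : Matrix (Fin d1) (Fin d2) ℝ)
    (U : Matrix (Fin d1) (Fin r) ℝ) (V : Matrix (Fin d2) (Fin r) ℝ) (σ : Fin r → ℝ)
    (hU : Uᵀ * U = 1) (hV : Vᵀ * V = 1) (hσ : ∀ i, 0 < σ i)
    (hX : X = U * Matrix.diagonal σ * Vᵀ) (τ : ℝ) (hτ : 0 ≤ τ) :
    ∀ Y : Matrix (Fin d1) (Fin d2) ℝ,
      1 / 2 * frobSq (U * Matrix.diagonal (fun i => max (σ i - τ) 0) * Vᵀ - X)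
          + τ * nuclearNorm (U * Matrix.diagonal (fun i => max (σ i - τ) 0) * Vᵀ) ≤
        1 / 2 * frobSq (Y - X) + τ * nuclearNorm Y := by
  set p : Fin r → ℝ := fun i => max (σ i - τ) 0
  have hresidual : X - U * diagonal p * Vᵀ = U * diagonal (fun i => min (σ i) τ) * Vᵀ := by
    rw [hX, ← Matrix.sub_mul, ← Matrix.mul_sub, diagonal_sub]
    congr 3 with i
    grind
  refine objective_le_of_dual_certificate ?_ ?_
  · rw [hresidual]
    refine (l2_opNorm_svd_le hU hV _).trans (pi_norm_le_iff_of_nonneg hτ |>.2 fun i => ?_)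
    rw [Real.norm_of_nonneg (le_min (hσ i).le hτ)]
    exact min_le_right _ _
  · rw [hresidual, trace_svd_transpose_mul_svd hU hV,
      nuclearNorm_svd hU hV fun i => le_max_right _ _, Finset.mul_sum]
    refine Finset.sum_congr rfl fun i _ => ?_
    grind
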